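/- Let m_1, ..., m_q be monomials in 4 variables (represented as exponent vectors in Fin 4 → ℕ), let α_r = max_s (m_s)_r, and for each s define m'_s by (m'_s)_r = α_r if (m_s)_r = α_r and 0 otherwise. If for indices i, j, k we have m_k divides lcm(m_i, m_j) (i.e., (m_k)_r ≤ max((m_i)_r, (m_j)_r) for all r), then m'_k divides lcm(m'_i, m'_j). -/

import Mathlib

/-!
A coordinate of `m'_k` is nonzero only where `m_k` attains the column maximum `α_r`; since
`m_k r ≤ max (m_i r) (m_j r) ≤ α_r`, one of `m_i`, `m_j` attains it there too.
-/

/-- The coordinate of a twin monomial, for column maximum `a`. -/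
def twinCoord {β : Type*} [Zero β] [DecidableEq β] (a x : β) : β :=
  if x = a then a else 0

lemma twinCoord_le_max {β : Type*} [LinearOrder β] [Zero β] {a x y z : β}
    (ha : 0 ≤ a) (hx : x ≤ a) (hy : y ≤ a) (hz : z ≤ max x y) :
    twinCoord a z ≤ max (twinCoord a x) (twinCoord a y) := by
  unfold twinCoord
  by_cases hza : z = a
  · subst hza
    rcases le_max_iff.mp hz with hxz | hyz
    · rw [if_pos rfl, if_pos (le_antisymm hx hxz)]
      exact le_max_left _ _
    · rw [if_pos rfl, if_pos (le_antisymm hy hyz)]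
      exact le_max_right _ _
  · rw [if_neg hza]
    refine le_max_of_le_left ?_
    split_ifs
    exacts [ha, le_rfl]

theorem twin_divides_lcm (q : ℕ) (m : Fin q → Fin 4 → ℕ)
    (α : Fin 4 → ℕ) (hα : ∀ r, α r = Finset.univ.sup (fun s => m s r))
    (m' : Fin q → Fin 4 → ℕ)
    (hm' : ∀ s r, m' s r = if m s r = α r then α r else 0)
    (i j k : Fin q)
    (hdiv : ∀ r, m k r ≤ max (m i r) (m j r)) :
    ∀ r, m' k r ≤ max (m' i r) (m' j r) := by
  intro r
  have hle : ∀ s, m s r ≤ α r := fun s => hα r ▸ Finset.le_sup (f := (m · r)) (Finset.mem_univ s)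
  simpa only [hm', twinCoord] using twinCoord_le_max (Nat.zero_le _) (hle i) (hle j) (hdiv r)
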